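/- arXiv:2604.20238 — 2 statements merged into one kernel-verified Lean document; each statement's English description precedes it below -/
import Mathlib

section
/- Under a Dirichlet process prior with parameter a·F_0 where F_0 has density f_0(·,θ) and θ has a prior π(θ), the posterior density of θ given n observations with distinct values x₁ < ... < x_k having multiplicities j₁,...,j_k is proportional to π(θ)·∏_{i=1}^{k} f_0(x_i,θ); in particular, if all n data points are distinct, the posterior for θ coincides with the ordinary parametric posterior π(θ)·∏_{i=1}^{n} f_0(x_i,θ). -/
open Finset Filter

private lemma gamma_ratio_prod (x : ℝ) (hx : 0 < x) (m : ℕ) :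
    Real.Gamma (x + m) = Real.Gamma x * ∏ i ∈ Finset.range m, (x + i) := by
  induction m with
  | zero => simp
  | succ m ih =>
    have hxm : x + (m : ℝ) ≠ 0 := by positivity
    have : x + ((m : ℕ) + 1 : ℕ) = (x + m) + 1 := by push_cast; ring
    rw [this, Real.Gamma_add_one hxm, ih, Finset.prod_range_succ]; ring

private lemma factor_tendsto (c : ℝ) (hc : 0 < c) (m : ℕ) (hm : 1 ≤ m) :
    Tendsto (fun ε : ℝ => Real.Gamma (c * ε + m) / Real.Gamma (c * ε) / ε)
      (nhdsWithin 0 (Set.Ioi 0)) (nhds (c * (m - 1).factorial)) := by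
  have heq : ∀ᶠ ε in nhdsWithin (0:ℝ) (Set.Ioi 0),
      Real.Gamma (c * ε + m) / Real.Gamma (c * ε) / ε
        = c * ∏ i ∈ Finset.range (m - 1), (c * ε + (i + 1)) := by
    filter_upwards [self_mem_nhdsWithin] with ε hε
    have hε : (0:ℝ) < ε := hε
    have hcε : 0 < c * ε := by positivity
    have hG : Real.Gamma (c * ε) ≠ 0 := (Real.Gamma_pos_of_pos hcε).ne'
    rw [gamma_ratio_prod _ hcε m, mul_div_cancel_left₀ _ hG]
    obtain ⟨m', rfl⟩ : ∃ m', m = m' + 1 := ⟨m - 1, (Nat.succ_pred_eq_of_pos hm).symm⟩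
    rw [Finset.prod_range_succ']
    simp only [Nat.add_sub_cancel, Nat.cast_zero, add_zero]
    push_cast
    rw [mul_div_assoc, mul_div_cancel_right₀ _ hε.ne', mul_comm]
  rw [tendsto_congr' heq]
  have hval : c * ∏ i ∈ Finset.range (m - 1), (c * (0:ℝ) + (↑i + 1))
      = c * (m - 1).factorial := by
    simp only [mul_zero, zero_add]
    congr 1
    exact_mod_cast congrArg (Nat.cast : ℕ → ℝ) (Finset.prod_range_add_one_eq_factorial (m - 1))
  have hcont : Tendsto (fun ε : ℝ => c * ∏ i ∈ Finset.range (m - 1), (c * ε + (i + 1)))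
      (nhds 0) (nhds (c * ∏ i ∈ Finset.range (m - 1), (c * 0 + (i + 1)))) := by
    apply Continuous.tendsto
    continuity
  rw [hval] at hcont
  exact hcont.mono_left nhdsWithin_le_nhds

/-- Under a Dirichlet process prior `a·F₀(·,θ)` with a prior `π` on `θ`, the
posterior for `θ` given observations with `k` distinct values of multiplicities
`j₁,…,j_k` is proportional to `π(θ)·∏ᵢ f₀(xᵢ,θ)`: the joint density obtained
from the Dirichlet product-moment formula, normalized by `ε^k`, converges as
`ε → 0⁺` to a constant (independent of `θ`) times `π(θ)·∏ᵢ f₀(xᵢ,θ)`.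
In particular, when all `n` data points are distinct (`k = n`, all `jᵢ = 1`),
this is the ordinary parametric posterior. -/
theorem dirichlet_process_semiparametric_posterior {Θ : Type*} (k : ℕ)
    (a : ℝ) (ha : 0 < a) (j : Fin k → ℕ) (hj : ∀ i, 1 ≤ j i)
    (n : ℕ) (hn : (n : ℝ) = ∑ i, (j i : ℝ))
    (π : Θ → ℝ) (f0 : Fin k → Θ → ℝ) (hf0 : ∀ i θ, 0 < f0 i θ) :
    ∃ C > 0, ∀ θ : Θ,
      Tendsto
        (fun ε : ℝ =>
          (π θ * (Real.Gamma a / Real.Gamma (a + n)) *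
              ∏ i, Real.Gamma (a * f0 i θ * ε + j i) / Real.Gamma (a * f0 i θ * ε))
            / ε ^ k)
        (nhdsWithin 0 (Set.Ioi 0))
        (nhds (C * (π θ * ∏ i, f0 i θ))) := by
  have hGa : 0 < Real.Gamma a := Real.Gamma_pos_of_pos ha
  have hGan : 0 < Real.Gamma (a + n) := Real.Gamma_pos_of_pos (by positivity)
  refine ⟨Real.Gamma a / Real.Gamma (a + n) * ∏ i, (a * (j i - 1).factorial), ?_, ?_⟩
  · apply mul_pos (div_pos hGa hGan)
    apply Finset.prod_pos
    intro i _
    exact mul_pos ha (Nat.cast_pos.mpr (Nat.factorial_pos _))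
  intro θ
  have heq : ∀ᶠ ε in nhdsWithin (0:ℝ) (Set.Ioi 0),
      (π θ * (Real.Gamma a / Real.Gamma (a + n)) *
          ∏ i, Real.Gamma (a * f0 i θ * ε + j i) / Real.Gamma (a * f0 i θ * ε)) / ε ^ k
        = π θ * (Real.Gamma a / Real.Gamma (a + n)) *
          ∏ i, (Real.Gamma (a * f0 i θ * ε + j i) / Real.Gamma (a * f0 i θ * ε) / ε) := by
    filter_upwards [self_mem_nhdsWithin] with ε hε
    have hε : (0:ℝ) < ε := hε
    simp only [Finset.prod_div_distrib, Finset.prod_const, Finset.card_univ, Fintype.card_fin,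
      mul_div_assoc]
  rw [tendsto_congr' heq]
  have hprod : Tendsto
      (fun ε : ℝ => ∏ i, (Real.Gamma (a * f0 i θ * ε + j i) / Real.Gamma (a * f0 i θ * ε) / ε))
      (nhdsWithin 0 (Set.Ioi 0))
      (nhds (∏ i, (a * f0 i θ * (j i - 1).factorial))) := by
    apply tendsto_finset_prod
    intro i _
    exact factor_tendsto (a * f0 i θ) (mul_pos ha (hf0 i θ)) (j i) (hj i)
  have := (tendsto_const_nhds (x := π θ * (Real.Gamma a / Real.Gamma (a + n)))).mul hprod
  convert this using 2
  simp only [Finset.prod_mul_distrib]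
  ring
end

section
/- For the local log-linear model f(t,θ,β) = θ·exp{β(t−x)} with kernel K, the kernel-smoothed local log-likelihood evaluates to n h f_n(x) k_0^{−1} log θ − n h θ ψ(βh)/k_0 + β n h³ g_n(x)/k_0 (up to terms not depending on (θ,β)), where ψ(u) = ∫K(z)e^{uz}dz; consequently, given β, the posterior of θ under a Gamma(c f_0(x), c) prior is Gamma(c f_0(x) + n h f_n(x)/k_0, c + n h ψ(βh)/k_0). -/
open Finset MeasureTheory

/-- The Gamma(α, β) density. -/
noncomputable def gammaPdf (α β θ : ℝ) : ℝ :=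
  β ^ α / Real.Gamma α * θ ^ (α - 1) * Real.exp (-β * θ)

/-!
The substitution `t = x₀ + h z` turns the smoothed integral of `θ e^{β(t - x₀)}` into
`h θ ψ(β h) / k₀`, and the logarithm of the weighted product splits into a `log θ` part and a
`β` part, which are the two kernel sums. As a function of `θ` the local likelihood is therefore
`θ^A e^{-B θ}`, which is the Gamma kernel: multiplying a `Γ(a, b)` density by it gives a
multiple of the `Γ(a + A, b + B)` density.
-/

theorem integral_comp_inv_mul_sub {F : Type*} [NormedAddCommGroup F] [NormedSpace ℝ F]
    (g : ℝ → F) (h x₀ : ℝ) :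
    ∫ t, g (h⁻¹ * (t - x₀)) = |h| • ∫ z, g z := by
  rw [integral_sub_right_eq_self (fun u => g (h⁻¹ * u)) x₀,
    Measure.integral_comp_inv_mul_left]

theorem integral_kernel_mul_loglinear (K : ℝ → ℝ) {h : ℝ} (hh : 0 < h)
    (x₀ θ β k₀ : ℝ) :
    ∫ t, (K (h⁻¹ * (t - x₀)) / k₀) * (θ * Real.exp (β * (t - x₀)))
      = h * θ * (∫ z, K z * Real.exp (β * h * z)) / k₀ := by
  set g : ℝ → ℝ := fun z => K z * Real.exp (β * h * z)
  have hsubst : ∀ t, (K (h⁻¹ * (t - x₀)) / k₀) * (θ * Real.exp (β * (t - x₀)))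
      = θ / k₀ * g (h⁻¹ * (t - x₀)) := fun t => by
    rw [show β * (t - x₀) = β * h * (h⁻¹ * (t - x₀)) by field_simp]
    ring
  simp_rw [hsubst]
  rw [integral_const_mul, integral_comp_inv_mul_sub g, abs_of_pos hh, smul_eq_mul]
  ring

theorem log_prod_rpow_loglinear {ι : Type*} (s : Finset ι) {θ : ℝ} (hθ : 0 < θ) (β : ℝ)
    (d w : ι → ℝ) :
    Real.log (∏ i ∈ s, (θ * Real.exp (β * d i)) ^ w i)
      = Real.log θ * ∑ i ∈ s, w i + β * ∑ i ∈ s, d i * w i := by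
  have hpos : ∀ i, 0 < θ * Real.exp (β * d i) := fun i => mul_pos hθ (Real.exp_pos _)
  rw [Real.log_prod fun i _ => (Real.rpow_pos_of_pos (hpos i) _).ne', mul_sum, mul_sum,
    ← sum_add_distrib]
  refine sum_congr rfl fun i _ => ?_
  rw [Real.log_rpow (hpos i), Real.log_mul hθ.ne' (Real.exp_ne_zero _), Real.log_exp]
  ring

theorem gammaPdf_mul_rpow_mul_exp {a b A B θ : ℝ} (haA : 0 < a + A) (hbB : 0 < b + B)
    (hθ : 0 < θ) :
    gammaPdf a b θ * (θ ^ A * Real.exp (-B * θ))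
      = b ^ a / Real.Gamma a * (Real.Gamma (a + A) / (b + B) ^ (a + A))
        * gammaPdf (a + A) (b + B) θ := by
  have hΓ : Real.Gamma (a + A) ≠ 0 := (Real.Gamma_pos_of_pos haA).ne'
  have hpow : (b + B) ^ (a + A) ≠ 0 := (Real.rpow_pos_of_pos hbB _).ne'
  have hθpow : θ ^ (a + A - 1) = θ ^ (a - 1) * θ ^ A := by
    rw [← Real.rpow_add hθ]; ring_nf
  have hexp : Real.exp (-(b + B) * θ) = Real.exp (-b * θ) * Real.exp (-B * θ) := by
    rw [← Real.exp_add]; ring_nf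
  unfold gammaPdf
  rw [hθpow, hexp]
  field_simp

theorem exists_pos_gammaPdf_mul_rpow_mul_exp {a b A B : ℝ} (ha : 0 < a) (hb : 0 < b)
    (haA : 0 < a + A) (hbB : 0 < b + B) :
    ∃ C > 0, ∀ θ : ℝ, 0 < θ →
      gammaPdf a b θ * (θ ^ A * Real.exp (-B * θ)) = C * gammaPdf (a + A) (b + B) θ :=
  ⟨_, mul_pos (div_pos (Real.rpow_pos_of_pos hb _) (Real.Gamma_pos_of_pos ha))
      (div_pos (Real.Gamma_pos_of_pos haA) (Real.rpow_pos_of_pos hbB _)),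
    fun _ hθ => gammaPdf_mul_rpow_mul_exp haA hbB hθ⟩

theorem local_loglinear_likelihood_and_posterior_general (n : ℕ) (hn : 0 < n)
    (x : Fin n → ℝ) (x0 h θ β c f0x : ℝ) (K : ℝ → ℝ)
    (hh : 0 < h) (hθ : 0 < θ) (hc : 0 < c) (hf0 : 0 < f0x)
    (hKpos : ∀ z, 0 ≤ K z) (hk0 : 0 < K 0) :
    Real.log
        ((∏ i, (θ * Real.exp (β * (x i - x0))) ^ (K (h⁻¹ * (x i - x0)) / K 0)) *
          Real.exp (-(n : ℝ) *
            ∫ t, (K (h⁻¹ * (t - x0)) / K 0) * (θ * Real.exp (β * (t - x0)))))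
      = (n : ℝ) * h * ((n : ℝ)⁻¹ * ∑ i, h⁻¹ * K (h⁻¹ * (x i - x0))) / K 0 * Real.log θ
        - (n : ℝ) * h * θ * (∫ z, K z * Real.exp (β * h * z)) / K 0
        + β * (n : ℝ) * h ^ 3 *
            ((n : ℝ)⁻¹ * ∑ i, h⁻¹ ^ 3 * (x i - x0) * K (h⁻¹ * (x i - x0))) / K 0
    ∧ ∃ C > 0, ∀ θ' : ℝ, 0 < θ' →
        gammaPdf (c * f0x) c θ' *
            (θ' ^ ((n : ℝ) * h * ((n : ℝ)⁻¹ * ∑ i, h⁻¹ * K (h⁻¹ * (x i - x0))) / K 0) *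
              Real.exp (-((n : ℝ) * h * (∫ z, K z * Real.exp (β * h * z)) / K 0) * θ'))
          = C * gammaPdf
              (c * f0x + (n : ℝ) * h * ((n : ℝ)⁻¹ * ∑ i, h⁻¹ * K (h⁻¹ * (x i - x0))) / K 0)
              (c + (n : ℝ) * h * (∫ z, K z * Real.exp (β * h * z)) / K 0) θ' := by
  have hn' : (n : ℝ) ≠ 0 := Nat.cast_ne_zero.mpr hn.ne'
  constructor
  · rw [Real.log_mul (prod_ne_zero_iff.mpr fun i _ =>
        (Real.rpow_pos_of_pos (mul_pos hθ (Real.exp_pos _)) _).ne') (Real.exp_ne_zero _),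
      Real.log_exp, log_prod_rpow_loglinear _ hθ, integral_kernel_mul_loglinear K hh]
    simp only [← sum_div, ← mul_sum, mul_div_assoc', mul_assoc]
    field_simp
    ring
  · have hA : 0 ≤ (n : ℝ) * h * ((n : ℝ)⁻¹ * ∑ i, h⁻¹ * K (h⁻¹ * (x i - x0))) / K 0 := by
      have hsum : 0 ≤ ∑ i, h⁻¹ * K (h⁻¹ * (x i - x0)) :=
        sum_nonneg fun i _ => mul_nonneg (inv_nonneg.2 hh.le) (hKpos _)
      positivity
    have hB : 0 ≤ (n : ℝ) * h * (∫ z, K z * Real.exp (β * h * z)) / K 0 := by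
      have hψ : 0 ≤ ∫ z, K z * Real.exp (β * h * z) :=
        integral_nonneg fun z => mul_nonneg (hKpos z) (Real.exp_pos _).le
      positivity
    exact exists_pos_gammaPdf_mul_rpow_mul_exp (mul_pos hc hf0) hc
      (add_pos_of_pos_of_nonneg (mul_pos hc hf0) hA) (add_pos_of_pos_of_nonneg hc hB)

/-- For the local log-linear model `f(t,θ,β) = θ·e^{β(t-x)}` with kernel `K`,
the kernel-smoothed local log-likelihood equals
`nhfₙ(x)k₀⁻¹ log θ - nhθψ(βh)/k₀ + βnh³gₙ(x)/k₀` with `ψ(u) = ∫K(z)e^{uz}dz`;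
consequently, given `β`, the posterior of `θ` under a `Γ(c·f₀(x), c)` prior is
`Γ(c·f₀(x) + nhfₙ(x)/k₀, c + nhψ(βh)/k₀)`. -/
theorem local_loglinear_likelihood_and_posterior (n : ℕ) (hn : 0 < n)
    (x : Fin n → ℝ) (x0 h θ β c f0x : ℝ) (K : ℝ → ℝ)
    (hh : 0 < h) (hθ : 0 < θ) (hc : 0 < c) (hf0 : 0 < f0x)
    (hKmeas : Measurable K) (hKpos : ∀ z, 0 ≤ K z) (hk0 : 0 < K 0)
    (hKint : Integrable (fun z => K z * Real.exp (β * h * z)))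
    (hψ : 0 < ∫ z, K z * Real.exp (β * h * z)) :
    Real.log
        ((∏ i, (θ * Real.exp (β * (x i - x0))) ^ (K (h⁻¹ * (x i - x0)) / K 0)) *
          Real.exp (-(n : ℝ) *
            ∫ t, (K (h⁻¹ * (t - x0)) / K 0) * (θ * Real.exp (β * (t - x0)))))
      = (n : ℝ) * h * ((n : ℝ)⁻¹ * ∑ i, h⁻¹ * K (h⁻¹ * (x i - x0))) / K 0 * Real.log θ
        - (n : ℝ) * h * θ * (∫ z, K z * Real.exp (β * h * z)) / K 0
        + β * (n : ℝ) * h ^ 3 *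
            ((n : ℝ)⁻¹ * ∑ i, h⁻¹ ^ 3 * (x i - x0) * K (h⁻¹ * (x i - x0))) / K 0
    ∧ ∃ C > 0, ∀ θ' : ℝ, 0 < θ' →
        gammaPdf (c * f0x) c θ' *
            (θ' ^ ((n : ℝ) * h * ((n : ℝ)⁻¹ * ∑ i, h⁻¹ * K (h⁻¹ * (x i - x0))) / K 0) *
              Real.exp (-((n : ℝ) * h * (∫ z, K z * Real.exp (β * h * z)) / K 0) * θ'))
          = C * gammaPdf
              (c * f0x + (n : ℝ) * h * ((n : ℝ)⁻¹ * ∑ i, h⁻¹ * K (h⁻¹ * (x i - x0))) / K 0)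
              (c + (n : ℝ) * h * (∫ z, K z * Real.exp (β * h * z)) / K 0) θ' :=
  local_loglinear_likelihood_and_posterior_general n hn x x0 h θ β c f0x K hh hθ hc hf0 hKpos hk0
end
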